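/- arXiv:1810.07240 — 2 statements merged into one kernel-verified Lean document; each statement's English description precedes it below -/
import Mathlib

section
/- The classifier Γ₀^B based on the observed covariate fragments is optimal: for every classifier of the form Γ₀(χ^(δ)) = Σ_{k=1}^M 1{δ=k}·g_k(χ|_{s_k}) with Borel-measurable g_k: L²(s_k) → {0,1}, one has ℙ{Γ₀^B(χ^(δ)) ≠ Y} ≤ ℙ{Γ₀(χ^(δ)) ≠ Y}. -/
/-!
For `{0,1}`-valued `F` and `Y` one has `P{F ≠ Y} = 𝔼 Y − 𝔼[F (2Y − 1)]`, so a classifier is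
better the larger `𝔼[F (2Y − 1)]` is. Splitting along the missingness pattern, this is
`∑ₖ 𝔼[cₖ (2Y − 1) 1{δ = k}]`, where `cₖ` is the rule applied on `{δ = k}`. When `cₖ` is a
function of the observed fragment `χ|_{sₖ}`, the tower property turns the `k`-th term into
`𝔼[cₖ φₖ⁰]`, which is maximised pointwise by `cₖ = 1{φₖ⁰ > 0}`.
-/

open MeasureTheory ProbabilityTheory Filter

noncomputable section

noncomputable instance (μ : Measure ℝ) : MeasurableSpace (Lp ℝ 2 μ) := borel _
instance (μ : Measure ℝ) : BorelSpace (Lp ℝ 2 μ) := ⟨rfl⟩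

section Patternwise

variable {Ω ι : Type*} [DecidableEq ι]

lemma integrable_mul_ite_eq [MeasurableSpace Ω] [MeasurableSpace ι] [MeasurableSingletonClass ι]
    {P : Measure Ω} {δ : Ω → ι} (hδ : Measurable δ) {Z : Ω → ℝ} (hZ : Integrable Z P) (k : ι) :
    Integrable (fun ω => Z ω * if δ ω = k then 1 else 0) P :=
  hZ.mul_bdd (Measurable.ite (hδ (measurableSet_singleton k)) measurable_const
    measurable_const).aestronglyMeasurable (c := 1) (.of_forall fun ω => by split_ifs <;> simp)

variable [Fintype ι]

def patternwise (δ : Ω → ι) (c : ι → Ω → ℝ) (ω : Ω) : ℝ :=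
  ∑ k, (if δ ω = k then (1 : ℝ) else 0) * c k ω

lemma patternwise_apply (δ : Ω → ι) (c : ι → Ω → ℝ) (ω : Ω) :
    patternwise δ c ω = c (δ ω) ω := by
  simp [patternwise, ite_mul]

variable [MeasurableSpace Ω] [MeasurableSpace ι] [MeasurableSingletonClass ι] {δ : Ω → ι}
  {c : ι → Ω → ℝ}

lemma measurable_patternwise (hδ : Measurable δ) (hc : ∀ k, Measurable (c k)) :
    Measurable (patternwise δ c) :=
  Finset.measurable_sum _ fun k _ =>
    (Measurable.ite (hδ (measurableSet_singleton k)) measurable_const measurable_const).mul (hc k)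

lemma integral_patternwise_mul {P : Measure Ω} (hδ : Measurable δ) (hc : ∀ k, Measurable (c k))
    {C : ℝ} (hcC : ∀ k ω, ‖c k ω‖ ≤ C) {Z : Ω → ℝ} (hZ : Integrable Z P) :
    ∫ ω, patternwise δ c ω * Z ω ∂P
      = ∑ k, ∫ ω, c k ω * (Z ω * if δ ω = k then 1 else 0) ∂P := by
  have hterm k : Integrable (fun ω => c k ω * (Z ω * if δ ω = k then 1 else 0)) P :=
    (integrable_mul_ite_eq hδ hZ k).bdd_mul (hc k).aestronglyMeasurable (.of_forall (hcC k))
  rw [← integral_finsetSum _ fun k _ => hterm k]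
  congr with ω
  simp only [patternwise, Finset.sum_mul]
  exact Finset.sum_congr rfl fun k _ => by ring

end Patternwise

section Risk

variable {Ω : Type*} [MeasurableSpace Ω] {P : Measure Ω} [IsProbabilityMeasure P] {F G Y : Ω → ℝ}

lemma measureReal_setOf_ne_eq (hF : Measurable F) (hY : Measurable Y)
    (hF01 : ∀ ω, F ω = 0 ∨ F ω = 1) (hY01 : ∀ ω, Y ω = 0 ∨ Y ω = 1) :
    P.real {ω | F ω ≠ Y ω} = ∫ ω, Y ω ∂P - ∫ ω, F ω * (2 * Y ω - 1) ∂P := by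
  have hYint : Integrable Y P :=
    (integrable_const (1 : ℝ)).mono' hY.aestronglyMeasurable
      (.of_forall fun ω => by rcases hY01 ω with h | h <;> simp [h])
  have hFYint : Integrable (fun ω => F ω * (2 * Y ω - 1)) P :=
    (integrable_const (1 : ℝ)).mono' (hF.mul ((hY.const_mul 2).sub_const 1)).aestronglyMeasurable
      (.of_forall fun ω => by
        rcases hF01 ω with h | h <;> rcases hY01 ω with h' | h' <;> norm_num [h, h'])
  have hA : MeasurableSet {ω | F ω ≠ Y ω} := (measurableSet_eq_fun hF hY).compl
  rw [← integral_sub hYint hFYint, ← integral_indicator_one hA]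
  congr with ω
  rcases hF01 ω with h | h <;> rcases hY01 ω with h' | h' <;>
    norm_num [Set.indicator_apply, h, h']

lemma measure_setOf_ne_le_of_integral_le (hF : Measurable F) (hG : Measurable G)
    (hY : Measurable Y) (hF01 : ∀ ω, F ω = 0 ∨ F ω = 1) (hG01 : ∀ ω, G ω = 0 ∨ G ω = 1)
    (hY01 : ∀ ω, Y ω = 0 ∨ Y ω = 1)
    (h : ∫ ω, G ω * (2 * Y ω - 1) ∂P ≤ ∫ ω, F ω * (2 * Y ω - 1) ∂P) :
    P {ω | F ω ≠ Y ω} ≤ P {ω | G ω ≠ Y ω} := by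
  rw [← ENNReal.toReal_le_toReal (measure_ne_top P _) (measure_ne_top P _)]
  change P.real _ ≤ P.real _
  rw [measureReal_setOf_ne_eq hF hY hF01 hY01, measureReal_setOf_ne_eq hG hY hG01 hY01]
  linarith

end Risk

lemma mul_le_ite_pos_mul {t x : ℝ} (ht : t ∈ Set.Icc 0 1) :
    t * x ≤ (if 0 < x then 1 else 0) * x := by
  split_ifs with hx
  · nlinarith [ht.2]
  · nlinarith [ht.1]

section Bayes

variable {Ω : Type*} {m mΩ : MeasurableSpace Ω} {P : Measure Ω} [IsFiniteMeasure P]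
  {c f : Ω → ℝ}

lemma integral_mul_eq_integral_mul_condExp (hm : m ≤ mΩ) (hc : StronglyMeasurable[m] c)
    {C : ℝ} (hcC : ∀ ω, ‖c ω‖ ≤ C) (hf : Integrable f P) :
    ∫ ω, c ω * f ω ∂P = ∫ ω, c ω * P[f|m] ω ∂P := by
  rw [← integral_condExp hm]
  exact integral_congr_ae (condExp_stronglyMeasurable_mul_of_bound hm hc hf C (.of_forall hcC))

lemma integral_mul_le_integral_ite_condExp_pos_mul (hm : m ≤ mΩ)
    (hc : StronglyMeasurable[m] c) (hc01 : ∀ ω, c ω ∈ Set.Icc 0 1) (hf : Integrable f P) :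
    ∫ ω, c ω * f ω ∂P ≤ ∫ ω, (if 0 < P[f|m] ω then 1 else 0) * f ω ∂P := by
  have hcC ω : ‖c ω‖ ≤ 1 := abs_le.2 ⟨by linarith [(hc01 ω).1], (hc01 ω).2⟩
  have hpos : MeasurableSet[m] {ω | 0 < P[f|m] ω} :=
    stronglyMeasurable_condExp.measurable measurableSet_Ioi
  have hB : StronglyMeasurable[m] fun ω => if 0 < P[f|m] ω then (1 : ℝ) else 0 :=
    (Measurable.ite hpos measurable_const measurable_const).stronglyMeasurable
  have hBC ω : ‖if 0 < P[f|m] ω then (1 : ℝ) else 0‖ ≤ 1 := by split_ifs <;> simp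
  rw [integral_mul_eq_integral_mul_condExp hm hc hcC hf,
    integral_mul_eq_integral_mul_condExp hm hB hBC hf]
  exact integral_mono
    (integrable_condExp.bdd_mul (hc.mono hm).aestronglyMeasurable (.of_forall hcC))
    (integrable_condExp.bdd_mul (hB.mono hm).aestronglyMeasurable (.of_forall hBC))
    fun ω => mul_le_ite_pos_mul (hc01 ω)

end Bayes

theorem functional_bayes_classifier_optimal_general
    {Ω : Type} [MeasurableSpace Ω] (P : Measure Ω) [IsProbabilityMeasure P]
    (M : ℕ)
    (Y : Ω → ℝ) (hYmeas : Measurable Y) (hY01 : ∀ ω, Y ω = 0 ∨ Y ω = 1)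
    (δ : Ω → Fin M) (hδ : Measurable δ)
    (s : Fin M → Set ℝ)
    -- the observed fragments χ|_{s k} ∈ L²(s k)
    (χres : (k : Fin M) → Ω → Lp ℝ 2 (volume.restrict (s k)))
    (hχres : ∀ k, Measurable (χres k))
    -- φ0 k is a version of the conditional expectation 𝔼[(2Y−1)·1{δ=k} | σ(χ|_{s_k})]
    (φ0 : Fin M → Ω → ℝ)
    (hφ0 : ∀ k, φ0 k =
      P[(fun ω => (2 * Y ω - 1) * (if δ ω = k then (1:ℝ) else 0)) |
        MeasurableSpace.comap (χres k) inferInstance])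
    -- a competing classifier built from Borel-measurable {0,1}-valued g_k on L²(s_k)
    (g : (k : Fin M) → Lp ℝ 2 (volume.restrict (s k)) → ℝ)
    (hg : ∀ k, Measurable (g k)) (hg01 : ∀ k u, g k u = 0 ∨ g k u = 1) :
    P {ω | (∑ k, (if δ ω = k then (1:ℝ) else 0) * (if 0 < φ0 k ω then (1:ℝ) else 0)) ≠ Y ω}
      ≤ P {ω | (∑ k, (if δ ω = k then (1:ℝ) else 0) * g k (χres k ω)) ≠ Y ω} := by
  set bayes : Fin M → Ω → ℝ := fun k ω => if 0 < φ0 k ω then 1 else 0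
  set rival : Fin M → Ω → ℝ := fun k ω => g k (χres k ω)
  have hm k : MeasurableSpace.comap (χres k) inferInstance ≤ ‹MeasurableSpace Ω› :=
    (hχres k).comap_le
  have hbayes01 k ω : bayes k ω = 0 ∨ bayes k ω = 1 := by
    simp only [bayes]; split_ifs <;> simp
  have hrival01 k ω : rival k ω = 0 ∨ rival k ω = 1 := hg01 k _
  have hbayes k : Measurable (bayes k) := by
    refine Measurable.ite ?_ measurable_const measurable_const
    rw [hφ0 k]
    exact (stronglyMeasurable_condExp.mono (hm k)).measurable measurableSet_Ioi
  have hrival k : StronglyMeasurable[MeasurableSpace.comap (χres k) inferInstance] (rival k) :=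
    ((hg k).comp (comap_measurable (χres k))).stronglyMeasurable
  have hrival' k : Measurable (rival k) := (hrival k).measurable.mono (hm k) le_rfl
  have hnorm {c : Fin M → Ω → ℝ} (hc : ∀ k ω, c k ω = 0 ∨ c k ω = 1) k ω : ‖c k ω‖ ≤ 1 := by
    rcases hc k ω with h | h <;> simp [h]
  have hZ : Integrable (fun ω => 2 * Y ω - 1) P :=
    (integrable_const (1 : ℝ)).mono' ((hYmeas.const_mul 2).sub_const 1).aestronglyMeasurable
      (.of_forall fun ω => by rcases hY01 ω with h | h <;> norm_num [h])
  refine measure_setOf_ne_le_of_integral_le (F := patternwise δ bayes)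
    (G := patternwise δ rival) (measurable_patternwise hδ hbayes)
    (measurable_patternwise hδ hrival') hYmeas
    (fun ω => by rw [patternwise_apply]; exact hbayes01 _ _)
    (fun ω => by rw [patternwise_apply]; exact hrival01 _ _) hY01 ?_
  rw [integral_patternwise_mul hδ hrival' (hnorm hrival01) hZ,
    integral_patternwise_mul hδ hbayes (hnorm hbayes01) hZ]
  refine Finset.sum_le_sum fun k _ => ?_
  simp only [bayes, hφ0 k]
  exact integral_mul_le_integral_ite_condExp_pos_mul (hm k) (hrival k)
    (fun ω => by rcases hrival01 k ω with h | h <;> simp [h]) (integrable_mul_ite_eq hδ hZ k)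

/-- In the functional setting with missing fragments, the classifier
`Γ₀^B(χ^(δ)) = Σ_k 1{δ=k}·1{φ_k⁰(χ|_{s_k}) > 0}`, where
`φ_k⁰(χ|_{s_k}) = 𝔼[(2Y−1)·1{δ=k} | σ(χ|_{s_k})]`, is optimal: for every classifier of the
form `Γ₀(χ^(δ)) = Σ_k 1{δ=k}·g_k(χ|_{s_k})` with Borel-measurable `g_k : L²(s_k) → {0,1}`,
one has `ℙ{Γ₀^B(χ^(δ)) ≠ Y} ≤ ℙ{Γ₀(χ^(δ)) ≠ Y}`. -/
theorem functional_bayes_classifier_optimal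
    {Ω : Type} [MeasurableSpace Ω] (P : Measure Ω) [IsProbabilityMeasure P]
    (M : ℕ) (hM : 1 ≤ M)
    (Y : Ω → ℝ) (hYmeas : Measurable Y) (hY01 : ∀ ω, Y ω = 0 ∨ Y ω = 1)
    (δ : Ω → Fin M) (hδ : Measurable δ)
    -- the compact interval 𝓘 and the observation patterns s k ⊆ 𝓘, with s 0 = 𝓘
    (a b : ℝ) (hab : a ≤ b) (𝓘 : Set ℝ) (h𝓘 : 𝓘 = Set.Icc a b)
    (s : Fin M → Set ℝ) (hsmeas : ∀ k, MeasurableSet (s k))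
    (hs𝓘 : ∀ k, s k ⊆ 𝓘) (hs0 : ∀ h0 : 0 < M, s ⟨0, h0⟩ = 𝓘)
    -- the random curve χ ∈ L²(𝓘)
    (χ : Ω → Lp ℝ 2 (volume.restrict 𝓘)) (hχ : Measurable χ)
    -- the observed fragments χ|_{s k} ∈ L²(s k)
    (χres : (k : Fin M) → Ω → Lp ℝ 2 (volume.restrict (s k)))
    (hχres : ∀ k, Measurable (χres k))
    (hχresAE : ∀ k ω, (χres k ω : ℝ → ℝ) =ᵐ[volume.restrict (s k)] (χ ω : ℝ → ℝ))
    -- φ0 k is a version of the conditional expectation 𝔼[(2Y−1)·1{δ=k} | σ(χ|_{s_k})]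
    (φ0 : Fin M → Ω → ℝ)
    (hφ0 : ∀ k, φ0 k =
      P[(fun ω => (2 * Y ω - 1) * (if δ ω = k then (1:ℝ) else 0)) |
        MeasurableSpace.comap (χres k) inferInstance])
    -- a competing classifier built from Borel-measurable {0,1}-valued g_k on L²(s_k)
    (g : (k : Fin M) → Lp ℝ 2 (volume.restrict (s k)) → ℝ)
    (hg : ∀ k, Measurable (g k)) (hg01 : ∀ k u, g k u = 0 ∨ g k u = 1) :
    P {ω | (∑ k, (if δ ω = k then (1:ℝ) else 0) * (if 0 < φ0 k ω then (1:ℝ) else 0)) ≠ Y ω}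
      ≤ P {ω | (∑ k, (if δ ω = k then (1:ℝ) else 0) * g k (χres k ω)) ≠ Y ω} :=
  functional_bayes_classifier_optimal_general P M Y hYmeas hY01 δ hδ s χres hχres φ0 hφ0 g hg hg01

end
end

section
/- The error of the optimal classifier equals the infimum of the errors of all classifiers: ℙ{Γ₀^B(χ^(δ)) ≠ Y} = inf ℙ{Σ_{k=1}^M 1{δ=k}·g_k(χ|_{s_k}) ≠ Y}, where the infimum is taken over all M-tuples of Borel-measurable functions g_k: L²(s_k) → {0,1}, k = 1,…,M. -/
open MeasureTheory ProbabilityTheory Filter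

noncomputable section

/-- The misclassification error of the optimal classifier `Γ₀^B` equals
the infimum of the errors of all classifiers:
`ℙ{Γ₀^B(χ^(δ)) ≠ Y} = inf ℙ{Σ_k 1{δ=k}·g_k(χ|_{s_k}) ≠ Y}`, the infimum being over
all M-tuples of Borel-measurable functions `g_k : L²(s_k) → {0,1}`. -/
theorem functional_bayes_error_eq_inf
    {Ω : Type} [MeasurableSpace Ω] (P : Measure Ω) [IsProbabilityMeasure P]
    (M : ℕ) (hM : 1 ≤ M)
    (Y : Ω → ℝ) (hYmeas : Measurable Y) (hY01 : ∀ ω, Y ω = 0 ∨ Y ω = 1)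
    (δ : Ω → Fin M) (hδ : Measurable δ)
    (a b : ℝ) (hab : a ≤ b) (𝓘 : Set ℝ) (h𝓘 : 𝓘 = Set.Icc a b)
    (s : Fin M → Set ℝ) (hsmeas : ∀ k, MeasurableSet (s k))
    (hs𝓘 : ∀ k, s k ⊆ 𝓘) (hs0 : ∀ h0 : 0 < M, s ⟨0, h0⟩ = 𝓘)
    (χ : Ω → Lp ℝ 2 (volume.restrict 𝓘)) (hχ : Measurable χ)
    (χres : (k : Fin M) → Ω → Lp ℝ 2 (volume.restrict (s k)))
    (hχres : ∀ k, Measurable (χres k))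
    (hχresAE : ∀ k ω, (χres k ω : ℝ → ℝ) =ᵐ[volume.restrict (s k)] (χ ω : ℝ → ℝ))
    (φ0 : Fin M → Ω → ℝ)
    (hφ0 : ∀ k, φ0 k =
      P[(fun ω => (2 * Y ω - 1) * (if δ ω = k then (1:ℝ) else 0)) |
        MeasurableSpace.comap (χres k) inferInstance]) :
    P {ω | (∑ k, (if δ ω = k then (1:ℝ) else 0) * (if 0 < φ0 k ω then (1:ℝ) else 0)) ≠ Y ω}
      = ⨅ g : {g : (k : Fin M) → Lp ℝ 2 (volume.restrict (s k)) → ℝ //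
            (∀ k, Measurable (g k)) ∧ ∀ k u, g k u = 0 ∨ g k u = 1},
          P {ω | (∑ k, (if δ ω = k then (1:ℝ) else 0) * g.1 k (χres k ω)) ≠ Y ω} := by
  classical
  -- basic data
  have hYbd : ∀ ω, ‖Y ω‖ ≤ 1 := by
    intro ω; rcases hY01 ω with h | h <;> simp [h]
  have hYint : Integrable Y P :=
    (integrable_const (1:ℝ)).mono' hYmeas.aestronglyMeasurable (ae_of_all _ hYbd)
  let m : Fin M → MeasurableSpace Ω := fun k =>
    MeasurableSpace.comap (χres k) inferInstance
  have hm : ∀ k, m k ≤ ‹MeasurableSpace Ω› := fun k => (hχres k).comap_le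
  let Z : Fin M → Ω → ℝ := fun k ω => (2 * Y ω - 1) * (if δ ω = k then (1:ℝ) else 0)
  have hφ0' : ∀ k, φ0 k = P[Z k | m k] := hφ0
  have hZmeas : ∀ k, Measurable (Z k) := by
    intro k
    exact ((measurable_const.mul hYmeas).sub measurable_const).mul
      (Measurable.ite (hδ (measurableSet_singleton k)) measurable_const measurable_const)
  have hZbd : ∀ k ω, ‖Z k ω‖ ≤ 1 := by
    intro k ω
    rcases hY01 ω with h | h <;> by_cases hd : δ ω = k <;>
      simp [Z, h, hd, abs_le] <;> norm_num
  have hZint : ∀ k, Integrable (Z k) P := fun k =>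
    (integrable_const (1:ℝ)).mono' (hZmeas k).aestronglyMeasurable (ae_of_all _ (hZbd k))
  have hφmeas_m : ∀ k, Measurable[m k] (φ0 k) := by
    intro k; rw [hφ0' k]; exact stronglyMeasurable_condExp.measurable
  have hφmeas : ∀ k, Measurable (φ0 k) := fun k => (hφmeas_m k).mono (hm k) le_rfl
  have hφint : ∀ k, Integrable (φ0 k) P := by
    intro k; rw [hφ0' k]; exact integrable_condExp
  -- pull-out identity
  have key : ∀ (k : Fin M) (f : Ω → ℝ), Measurable[m k] f → (∀ ω, ‖f ω‖ ≤ 1) →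
      ∫ ω, f ω * Z k ω ∂P = ∫ ω, f ω * φ0 k ω ∂P := by
    intro k f hf hfb
    have hfb' : ∀ᵐ ω ∂P, ‖f ω‖ ≤ 1 := ae_of_all _ hfb
    have h1 : P[f * Z k | m k] =ᵐ[P] f * P[Z k | m k] :=
      condExp_stronglyMeasurable_mul_of_bound (hm k) (hf.stronglyMeasurable) (hZint k) 1 hfb'
    have h2 : ∫ ω, (P[f * Z k | m k]) ω ∂P = ∫ ω, (f * Z k) ω ∂P :=
      integral_condExp (hm k)
    calc ∫ ω, f ω * Z k ω ∂P = ∫ ω, (f * Z k) ω ∂P := rfl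
      _ = ∫ ω, (P[f * Z k | m k]) ω ∂P := h2.symm
      _ = ∫ ω, (f * P[Z k | m k]) ω ∂P := integral_congr_ae h1
      _ = ∫ ω, f ω * φ0 k ω ∂P := by rw [hφ0' k]; rfl
  -- error formula for {0,1}-valued classifiers
  have err : ∀ c : Ω → ℝ, Measurable c → (∀ ω, c ω = 0 ∨ c ω = 1) →
      Integrable (fun ω => c ω * (2 * Y ω - 1)) P ∧
      (P {ω | c ω ≠ Y ω}).toReal
        = (∫ ω, Y ω ∂P) - ∫ ω, c ω * (2 * Y ω - 1) ∂P := by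
    intro c hc hc01
    have hcbd : ∀ ω, ‖c ω * (2 * Y ω - 1)‖ ≤ 1 := by
      intro ω
      rcases hc01 ω with h | h <;> rcases hY01 ω with h' | h' <;>
        simp [h, h', abs_le] <;> norm_num
    have hcint : Integrable (fun ω => c ω * (2 * Y ω - 1)) P :=
      (integrable_const (1:ℝ)).mono'
        (hc.mul ((measurable_const.mul hYmeas).sub measurable_const)).aestronglyMeasurable
        (ae_of_all _ hcbd)
    refine ⟨hcint, ?_⟩
    have hA : MeasurableSet {ω | c ω ≠ Y ω} := (measurableSet_eq_fun hc hYmeas).compl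
    have h1 : (P {ω | c ω ≠ Y ω}).toReal
        = ∫ ω, Set.indicator {ω | c ω ≠ Y ω} 1 ω ∂P := (integral_indicator_one hA).symm
    rw [h1, ← integral_sub hYint hcint]
    refine integral_congr_ae (ae_of_all _ fun ω => ?_)
    rcases hc01 ω with h | h <;> rcases hY01 ω with h' | h' <;>
      simp [Set.indicator_apply, h, h'] <;> norm_num
  -- classifiers built from tuples
  have hone : ∀ (t : Fin M → ℝ) (ω : Ω),
      (∑ k, (if δ ω = k then (1:ℝ) else 0) * t k) = t (δ ω) := by
    intro t ω
    rw [Finset.sum_eq_single (δ ω)]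
    · simp
    · intro k _ hk; simp [Ne.symm hk]
    · intro h; exact absurd (Finset.mem_univ _) h
  -- generic computation of ∫ c * (2Y-1) for tuple-classifiers
  have sum_int : ∀ (u : (k : Fin M) → Ω → ℝ),
      (∀ k, Measurable[m k] (u k)) → (∀ k ω, ‖u k ω‖ ≤ 1) →
      Integrable (fun ω => (∑ k, (if δ ω = k then (1:ℝ) else 0) * u k ω) * (2 * Y ω - 1)) P →
      ∫ ω, (∑ k, (if δ ω = k then (1:ℝ) else 0) * u k ω) * (2 * Y ω - 1) ∂P
        = ∑ k, ∫ ω, u k ω * φ0 k ω ∂P := by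
    intro u humeas hubd _
    have hpt : ∀ ω, (∑ k, (if δ ω = k then (1:ℝ) else 0) * u k ω) * (2 * Y ω - 1)
        = ∑ k, u k ω * Z k ω := by
      intro ω
      rw [Finset.sum_mul]
      refine Finset.sum_congr rfl fun k _ => ?_
      simp only [Z]; ring
    calc ∫ ω, (∑ k, (if δ ω = k then (1:ℝ) else 0) * u k ω) * (2 * Y ω - 1) ∂P
        = ∫ ω, ∑ k, u k ω * Z k ω ∂P := by
          exact integral_congr_ae (ae_of_all _ hpt)
      _ = ∑ k, ∫ ω, u k ω * Z k ω ∂P := by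
          refine integral_finset_sum _ fun k _ => ?_
          exact (hZint k).bdd_mul
            (((humeas k).mono (hm k) le_rfl).aestronglyMeasurable)
            (ae_of_all _ (hubd k))
      _ = ∑ k, ∫ ω, u k ω * φ0 k ω ∂P :=
          Finset.sum_congr rfl fun k _ => key k (u k) (humeas k) (hubd k)
  -- the Bayes selector
  let f0 : Fin M → Ω → ℝ := fun k ω => if 0 < φ0 k ω then (1:ℝ) else 0
  have hf0meas_m : ∀ k, Measurable[m k] (f0 k) := by
    intro k
    have hs : MeasurableSet[m k] {ω | 0 < φ0 k ω} :=
      @measurableSet_lt _ _ _ _ _ (m k) _ _ _ (fun _ => (0:ℝ)) (φ0 k)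
        (@measurable_const _ _ _ (m k) _) (hφmeas_m k)
    exact Measurable.ite hs measurable_const measurable_const
  have hf0bd : ∀ k ω, ‖f0 k ω‖ ≤ 1 := by
    intro k ω; by_cases h : 0 < φ0 k ω <;> simp [f0, h]
  have hf0_01 : ∀ k ω, f0 k ω = 0 ∨ f0 k ω = 1 := by
    intro k ω; by_cases h : 0 < φ0 k ω
    · right; simp [f0, h]
    · left; simp [f0, h]
  have hf0meas : ∀ k, Measurable (f0 k) := fun k => (hf0meas_m k).mono (hm k) le_rfl
  -- the Bayes classifier as an ω-function
  have hc0meas : Measurable (fun ω => ∑ k, (if δ ω = k then (1:ℝ) else 0) * f0 k ω) := by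
    refine Finset.measurable_sum _ fun k _ => ?_
    exact (Measurable.ite (hδ (measurableSet_singleton k)) measurable_const
      measurable_const).mul (hf0meas k)
  have hc0_01 : ∀ ω, (∑ k, (if δ ω = k then (1:ℝ) else 0) * f0 k ω) = 0 ∨
      (∑ k, (if δ ω = k then (1:ℝ) else 0) * f0 k ω) = 1 := by
    intro ω; rw [hone]; exact hf0_01 _ ω
  obtain ⟨hc0int, hc0err⟩ := err _ hc0meas hc0_01
  have hc0sum : ∫ ω, (∑ k, (if δ ω = k then (1:ℝ) else 0) * f0 k ω) * (2 * Y ω - 1) ∂P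
      = ∑ k, ∫ ω, f0 k ω * φ0 k ω ∂P := sum_int f0 hf0meas_m hf0bd hc0int
  -- the right-hand side infimum
  refine le_antisymm (le_iInf fun g => ?_) ?_
  · -- optimality: Bayes error ≤ error of g
    obtain ⟨g, hgmeas, hg01⟩ := g
    have hgbd : ∀ k (u : Lp ℝ 2 (volume.restrict (s k))), ‖g k u‖ ≤ 1 := by
      intro k u; rcases hg01 k u with h | h <;> simp [h]
    let u : (k : Fin M) → Ω → ℝ := fun k ω => g k (χres k ω)
    have humeas : ∀ k, Measurable[m k] (u k) := by
      intro k
      have : Measurable[m k] (χres k) :=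
        @Measurable.of_comap_le _ _ _ _ (χres k) le_rfl
      exact (hgmeas k).comp this
    have hubd : ∀ k ω, ‖u k ω‖ ≤ 1 := fun k ω => hgbd k _
    have hcgmeas : Measurable (fun ω => ∑ k, (if δ ω = k then (1:ℝ) else 0) * u k ω) := by
      refine Finset.measurable_sum _ fun k _ => ?_
      exact (Measurable.ite (hδ (measurableSet_singleton k)) measurable_const
        measurable_const).mul ((hgmeas k).comp (hχres k))
    have hcg01 : ∀ ω, (∑ k, (if δ ω = k then (1:ℝ) else 0) * u k ω) = 0 ∨
        (∑ k, (if δ ω = k then (1:ℝ) else 0) * u k ω) = 1 := by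
      intro ω; rw [hone]; exact hg01 _ _
    obtain ⟨hcgint, hcgerr⟩ := err _ hcgmeas hcg01
    have hcgsum : ∫ ω, (∑ k, (if δ ω = k then (1:ℝ) else 0) * u k ω) * (2 * Y ω - 1) ∂P
        = ∑ k, ∫ ω, u k ω * φ0 k ω ∂P := sum_int u humeas hubd hcgint
    -- pointwise: u k ω * φ0 k ω ≤ f0 k ω * φ0 k ω
    have hterm : ∀ k, ∫ ω, u k ω * φ0 k ω ∂P ≤ ∫ ω, f0 k ω * φ0 k ω ∂P := by
      intro k
      have hint1 : Integrable (fun ω => u k ω * φ0 k ω) P :=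
        (hφint k).bdd_mul (((humeas k).mono (hm k) le_rfl).aestronglyMeasurable)
          (ae_of_all _ (hubd k))
      have hint2 : Integrable (fun ω => f0 k ω * φ0 k ω) P :=
        (hφint k).bdd_mul ((hf0meas k).aestronglyMeasurable) (ae_of_all _ (hf0bd k))
      refine integral_mono hint1 hint2 fun ω => ?_
      by_cases h : 0 < φ0 k ω
      · have : u k ω ≤ 1 := by
          rcases hg01 k (χres k ω) with h' | h' <;> simp [u, h'] <;> norm_num
        calc u k ω * φ0 k ω ≤ 1 * φ0 k ω :=
              mul_le_mul_of_nonneg_right this h.le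
          _ = f0 k ω * φ0 k ω := by simp [f0, h]
      · have hu0 : 0 ≤ u k ω := by
          rcases hg01 k (χres k ω) with h' | h' <;> simp [u, h'] <;> norm_num
        have : u k ω * φ0 k ω ≤ 0 :=
          mul_nonpos_of_nonneg_of_nonpos hu0 (not_lt.mp h)
        calc u k ω * φ0 k ω ≤ 0 := this
          _ = f0 k ω * φ0 k ω := by simp [f0, h]
    have hreal : (P {ω | (∑ k, (if δ ω = k then (1:ℝ) else 0) * f0 k ω) ≠ Y ω}).toReal
        ≤ (P {ω | (∑ k, (if δ ω = k then (1:ℝ) else 0) * u k ω) ≠ Y ω}).toReal := by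
      rw [hc0err, hcgerr, hc0sum, hcgsum]
      have := Finset.sum_le_sum fun k (_ : k ∈ Finset.univ) => hterm k
      linarith
    exact (ENNReal.toReal_le_toReal (measure_ne_top P _) (measure_ne_top P _)).mp hreal
  · -- the infimum is attained by a Borel tuple realizing the Bayes classifier
    have hBex : ∀ k, ∃ B : Set (Lp ℝ 2 (volume.restrict (s k))),
        MeasurableSet B ∧ χres k ⁻¹' B = {ω | 0 < φ0 k ω} := by
      intro k
      have hs : MeasurableSet[m k] {ω | 0 < φ0 k ω} :=
        @measurableSet_lt _ _ _ _ _ (m k) _ _ _ (fun _ => (0:ℝ)) (φ0 k)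
          (@measurable_const _ _ _ (m k) _) (hφmeas_m k)
      exact MeasurableSpace.measurableSet_comap.mp hs
    choose B hBmeas hBpre using hBex
    let gB : (k : Fin M) → Lp ℝ 2 (volume.restrict (s k)) → ℝ :=
      fun k u => if u ∈ B k then (1:ℝ) else 0
    have hgBmeas : ∀ k, Measurable (gB k) := fun k =>
      Measurable.ite (hBmeas k) measurable_const measurable_const
    have hgB01 : ∀ k u, gB k u = 0 ∨ gB k u = 1 := by
      intro k u; by_cases h : u ∈ B k
      · right; simp [gB, h]
      · left; simp [gB, h]
    have hgBval : ∀ k ω, gB k (χres k ω) = if 0 < φ0 k ω then (1:ℝ) else 0 := by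
      intro k ω
      have : χres k ω ∈ B k ↔ 0 < φ0 k ω := by
        constructor
        · intro h
          have : ω ∈ χres k ⁻¹' B k := h
          rw [hBpre k] at this; exact this
        · intro h
          have : ω ∈ {ω | 0 < φ0 k ω} := h
          rw [← hBpre k] at this; exact this
      by_cases h : 0 < φ0 k ω
      · simp only [gB, if_pos (this.mpr h), if_pos h]
      · simp only [gB, if_neg (fun hc => h (this.mp hc)), if_neg h]
    refine iInf_le_of_le ⟨gB, hgBmeas, hgB01⟩ (le_of_eq ?_)
    congr 1
    ext ω
    simp only [Set.mem_setOf_eq, hgBval]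
end
end
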